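/- If v > 0 and c > v, then every root of the characteristic polynomial of the Jacobian matrix J(0,0,1) of the reduced replicator vector field at the equilibrium P₁ = (0,0,1) is a negative real number; explicitly, the eigenvalues −v/4, −c/4, and (v−c)/4 are all negative. -/

import Mathlib

/-!
At `P₁ = (0, 0, 1)` the Jacobian is lower triangular, so its characteristic polynomial is the
product of `X - λ` over its diagonal entries `λ = (v - c)/4, -c/4, -v/4`, all negative when
`0 < v < c`. The entries themselves are derivatives of `F` along the coordinate lines through
`P₁`, i.e. derivatives of explicit polynomials in one variable.
-/

open Polynomial

noncomputable section

/-- The reduced replicator vector field of the asymmetric Hawk-Dove game. -/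
def F (v c : ℝ) (p : Fin 3 → ℝ) : Fin 3 → ℝ :=
  ![ (1/4) * p 0 * (c * (2*(p 0)^2 + 2*(p 0)*(p 1 + p 2 - 1) + 2*(p 1)*(p 2) - p 1 - p 2)
        - v * (2*(p 0) + p 1 + p 2 - 2)),
     -(1/4) * p 1 * (v * (2*(p 0) + p 1 + p 2 - 1) - c * (2*(p 0) + 2*(p 1) - 1) * (p 0 + p 2)),
     -(1/4) * p 2 * (v * (2*(p 0) + p 1 + p 2 - 1) - c * (p 0 + p 1) * (2*(p 0) + 2*(p 2) - 1)) ]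

/-- The Jacobian matrix of `F v c` at `p`: the matrix of the Fréchet derivative
with respect to the standard basis. -/
def J (v c : ℝ) (p : Fin 3 → ℝ) : Matrix (Fin 3) (Fin 3) ℝ :=
  Matrix.of fun i j => fderiv ℝ (F v c) p (Pi.single j 1) i

namespace Matrix

variable {n R : Type*} [Fintype n] [DecidableEq n] [LinearOrder n] [CommRing R]

theorem charpoly_of_isLowerTriangular (M : Matrix n n R) (h : M.IsLowerTriangular) :
    M.charpoly = ∏ i : n, (X - C (M i i)) := by
  simp [charpoly, det_of_isLowerTriangular _ h.charmatrix]

theorem exists_eq_diag_of_aeval_charpoly_eq_zero {A : Type*} [CommRing A] [IsDomain A]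
    [Algebra R A] {M : Matrix n n R} (h : M.IsLowerTriangular) {μ : A}
    (hμ : aeval μ M.charpoly = 0) : ∃ i, μ = algebraMap R A (M i i) := by
  simpa only [charpoly_of_isLowerTriangular M h, map_prod, map_sub, aeval_X, aeval_C,
    Finset.prod_eq_zero_iff, Finset.mem_univ, true_and, sub_eq_zero] using hμ

end Matrix

theorem differentiable_F (v c : ℝ) : Differentiable ℝ (F v c) := by
  refine differentiable_pi.2 fun i => ?_
  fin_cases i <;>
    simp only [F, Fin.zero_eta, Fin.mk_one, Fin.reduceFinMk, Matrix.cons_val_zero, Matrix.cons_val_one,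
      Matrix.cons_val] <;> fun_prop

theorem J_apply_eq_deriv (v c : ℝ) (p : Fin 3 → ℝ) (i j : Fin 3) :
    J v c p i j = deriv (fun t : ℝ => F v c (p + t • Pi.single j 1) i) 0 := by
  have hF := differentiable_F v c
  rw [J, Matrix.of_apply, ← (hF p).lineDeriv_eq_fderiv, lineDeriv, deriv_pi]
  intro i
  fun_prop

theorem J_P1 (v c : ℝ) :
    J v c ![0, 0, 1] =
      !![(v - c) / 4, 0, 0; 0, -(c / 4), 0; (c - 2 * v) / 4, (c - v) / 4, -(v / 4)] := by
  ext i j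
  rw [J_apply_eq_deriv]
  fin_cases i <;> fin_cases j <;> simp (disch := fun_prop) [F, Pi.single_apply] <;> ring

theorem J_P1_isLowerTriangular (v c : ℝ) : (J v c ![0, 0, 1]).IsLowerTriangular := by
  rw [J_P1]
  intro i j hij
  fin_cases i <;> fin_cases j <;> first | rfl | exact absurd hij (by decide)

theorem P1_stable_node (v c : ℝ) (hv : 0 < v) (hc : v < c) :
    (-(v/4) < 0 ∧ -(c/4) < 0 ∧ (v - c)/4 < 0) ∧
    ∀ μ : ℂ, aeval μ ((J v c ![0, 0, 1]).charpoly) = 0 →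
      ∃ r : ℝ, μ = (r : ℂ) ∧ r < 0 := by
  have hneg : -(v/4) < 0 ∧ -(c/4) < 0 ∧ (v - c)/4 < 0 := by
    refine ⟨?_, ?_, ?_⟩ <;> linarith
  refine ⟨hneg, fun μ hμ => ?_⟩
  obtain ⟨i, rfl⟩ := Matrix.exists_eq_diag_of_aeval_charpoly_eq_zero (J_P1_isLowerTriangular v c) hμ
  refine ⟨_, rfl, ?_⟩
  rw [J_P1]
  fin_cases i <;> simp [hneg]
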